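/- arXiv:1707.01634 — 3 statements merged into one kernel-verified Lean document; each statement's English description precedes it below -/
import Mathlib

section
/- For every k ≥ 3 there exists a connected graph R on n = k²−1 vertices with minimum degree δ(R) = (n−k+1)/k and exactly k−1 cut edges. (Construction: a central block isomorphic to K_{k−1}, together with k−1 blocks each isomorphic to K_k, joined by a matching of k−1 cut edges matching each vertex of the central block to a distinct outer block.) -/
open SimpleGraph

/-- Degree of a vertex. -/
noncomputable def vdeg {V : Type*} (G : SimpleGraph V) (v : V) : ℕ := (G.neighborSet v).ncard

/-- An edge-coloring `c` makes `G` conflict-free connected if any two distinct vertices are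
joined by a path on which some color appears on exactly one edge. -/
def IsCFConnected {V : Type*} (G : SimpleGraph V) (c : Sym2 V → ℕ) : Prop :=
  ∀ u v : V, u ≠ v → ∃ p : G.Walk u v, p.IsPath ∧
    ∃ col : ℕ, (p.edges.filter (fun e => c e = col)).length = 1

/-- The conflict-free connection number of `G`. -/
noncomputable def cfcNum {V : Type*} (G : SimpleGraph V) : ℕ :=
  sInf {k | ∃ c : Sym2 V → ℕ, (∀ e ∈ G.edgeSet, c e < k) ∧ IsCFConnected G c}

/-- The subgraph `C(G)` spanned by the cut edges (bridges) of `G`. -/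
def bridgeGraph {V : Type*} (G : SimpleGraph V) : SimpleGraph V :=
  SimpleGraph.fromEdgeSet {e | G.IsBridge e}

/-- A linear forest: an acyclic graph with maximum degree at most two. -/
def IsLinearForest {V : Type*} (H : SimpleGraph V) : Prop :=
  H.IsAcyclic ∧ ∀ v, (H.neighborSet v).ncard ≤ 2

/-! The witness is a hub joined by single edges to the roots of `k - 1` disjoint cliques, one of
order `k` and the others of order `k + 1`, so there are `1 + k + (k - 2)(k + 1) = k² - 1` vertices.
The hub has degree `k - 1` and every clique vertex has degree at least `k - 1`. Deleting a hub edge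
separates its clique from the hub, while an edge inside a clique of order at least three lies on a
triangle; so the cut edges are exactly the `k - 1` hub edges. -/

namespace SimpleGraph

variable {V : Type*} {G : SimpleGraph V}

lemma Reachable.eq_of_forall_adj {β : Sort*} {f : V → β} (hf : ∀ u v, G.Adj u v → f u = f v)
    {u v : V} (huv : G.Reachable u v) : f u = f v := by
  obtain ⟨p⟩ := huv
  induction p with
  | nil => rfl
  | cons h _ ih => exact (hf _ _ h).trans ih

lemma not_isBridge_of_adj_of_adj {u v w : V} (huw : G.Adj u w) (hwv : G.Adj w v) :
    ¬ G.IsBridge s(u, v) := by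
  rw [isBridge_iff, not_not]
  have huw' : (G.deleteEdges {s(u, v)}).Adj u w :=
    (deleteEdges_adj ..).2 ⟨huw, by rw [Set.mem_singleton_iff, Sym2.congr_right]; exact hwv.ne⟩
  have hwv' : (G.deleteEdges {s(u, v)}).Adj w v :=
    (deleteEdges_adj ..).2 ⟨hwv, by rw [Set.mem_singleton_iff, Sym2.congr_left]; exact huw.ne'⟩
  exact huw'.reachable.trans hwv'.reachable

end SimpleGraph

section CliqueStar

variable {ι : Type*} {α : ι → Type*} (root : ∀ i, α i)

/-- A hub `none` joined by a single edge to the root of each clique `α i`. -/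
def cliqueStar : SimpleGraph (Option (Σ i, α i)) :=
  SimpleGraph.fromRel fun
    | none, some x => x.2 = root x.1
    | some x, some y => x.1 = y.1
    | _, _ => False

variable {root}

@[simp]
lemma cliqueStar_adj_none_some {i : ι} {a : α i} :
    (cliqueStar root).Adj none (some ⟨i, a⟩) ↔ a = root i := by
  simp [cliqueStar]

@[simp]
lemma cliqueStar_adj_some_none {i : ι} {a : α i} :
    (cliqueStar root).Adj (some ⟨i, a⟩) none ↔ a = root i := by
  simp [cliqueStar]

@[simp]
lemma cliqueStar_adj_some_some {x y : Σ i, α i} :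
    (cliqueStar root).Adj (some x) (some y) ↔ x.1 = y.1 ∧ x ≠ y := by
  simp [cliqueStar, and_comm, eq_comm]

lemma cliqueStar_adj_some_some_same {i : ι} {a b : α i} :
    (cliqueStar root).Adj (some ⟨i, a⟩) (some ⟨i, b⟩) ↔ a ≠ b := by
  simp

lemma cliqueStar_reachable_none (v : Option (Σ i, α i)) : (cliqueStar root).Reachable none v := by
  rcases v with _ | ⟨i, a⟩
  · rfl
  have hroot : (cliqueStar root).Adj none (some ⟨i, root i⟩) := by simp
  obtain rfl | ha := eq_or_ne a (root i)
  · exact hroot.reachable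
  · exact hroot.reachable.trans (cliqueStar_adj_some_some_same.2 (Ne.symm ha)).reachable

lemma cliqueStar_connected : (cliqueStar root).Connected :=
  ⟨fun u v => (cliqueStar_reachable_none u).symm.trans (cliqueStar_reachable_none v)⟩

lemma neighborSet_cliqueStar_none :
    (cliqueStar root).neighborSet none = Set.range fun i => some ⟨i, root i⟩ := by
  ext (_ | ⟨i, a⟩) <;> simp [eq_comm]

lemma vdeg_cliqueStar_none : vdeg (cliqueStar root) none = Nat.card ι := by
  rw [vdeg, neighborSet_cliqueStar_none,
    Set.ncard_range_of_injective fun i j h => congrArg Sigma.fst (Option.some_injective _ h)]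

lemma le_vdeg_cliqueStar_some {i : ι} [Finite (α i)] (a : α i) :
    Nat.card (α i) - 1 ≤ vdeg (cliqueStar root) (some ⟨i, a⟩) := by
  have hsub :
      (fun b => some ⟨i, b⟩) '' {a}ᶜ ⊆ (cliqueStar root).neighborSet (some ⟨i, a⟩) := by
    rintro _ ⟨b, hb, rfl⟩
    rw [mem_neighborSet]
    exact cliqueStar_adj_some_some_same.2 (Ne.symm hb)
  have hfin : ((cliqueStar root).neighborSet (some ⟨i, a⟩)).Finite := by
    refine ((Set.finite_range fun b => some ⟨i, b⟩).insert none).subset ?_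
    rintro (_ | ⟨j, b⟩) h
    · exact Set.mem_insert _ _
    · rw [mem_neighborSet, cliqueStar_adj_some_some] at h
      obtain ⟨rfl, -⟩ := h
      exact Set.mem_insert_of_mem _ ⟨b, rfl⟩
  calc Nat.card (α i) - 1 = ((fun b => some ⟨i, b⟩) '' {a}ᶜ).ncard := by
        rw [Set.ncard_image_of_injective _ (fun b c h => by simpa using h), Set.ncard_compl,
          Set.ncard_singleton]
    _ ≤ vdeg (cliqueStar root) (some ⟨i, a⟩) := Set.ncard_le_ncard hsub hfin

lemma cliqueStar_isBridge_root (i : ι) :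
    (cliqueStar root).IsBridge s(none, some ⟨i, root i⟩) := by
  rw [isBridge_iff]
  intro hreach
  suffices hblock :
      ∀ u v, ((cliqueStar root).deleteEdges {s(none, some ⟨i, root i⟩)}).Adj u v →
        (u.elim False (·.1 = i)) = (v.elim False (·.1 = i)) by
    simpa using hreach.eq_of_forall_adj hblock
  rintro (_ | ⟨j, a⟩) (_ | ⟨l, b⟩) h <;> obtain ⟨hadj, hne⟩ := (deleteEdges_adj ..).1 h
  · rfl
  · simp only [cliqueStar_adj_none_some] at hadj
    subst hadj
    simp only [Option.elim_none, Option.elim_some, eq_iff_iff, false_iff]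
    rintro rfl
    exact hne rfl
  · simp only [cliqueStar_adj_some_none] at hadj
    subst hadj
    simp only [Option.elim_none, Option.elim_some, eq_iff_iff, iff_false]
    rintro rfl
    exact hne Sym2.eq_swap
  · obtain ⟨rfl, -⟩ := cliqueStar_adj_some_some.1 hadj
    rfl

lemma cliqueStar_not_isBridge_some_some {i : ι} (hi : 3 ≤ ENat.card (α i)) (a b : α i) :
    ¬ (cliqueStar root).IsBridge s(some ⟨i, a⟩, some ⟨i, b⟩) := by
  obtain ⟨c, hca, hcb⟩ := ENat.exists_ne_ne_of_three_le hi a b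
  exact not_isBridge_of_adj_of_adj (cliqueStar_adj_some_some_same.2 hca.symm)
    (cliqueStar_adj_some_some_same.2 hcb)

lemma setOf_isBridge_cliqueStar (h : ∀ i, 3 ≤ ENat.card (α i)) :
    {e | (cliqueStar root).IsBridge e} = Set.range fun i => s(none, some ⟨i, root i⟩) := by
  ext e
  induction e using Sym2.ind with
  | _ u v =>
    refine ⟨fun hb => ?_, ?_⟩
    · have hadj := hb.reachable_iff_adj.1 (cliqueStar_connected.preconnected u v)
      rcases u with _ | ⟨i, a⟩ <;> rcases v with _ | ⟨j, b⟩
      · exact absurd hadj (SimpleGraph.irrefl _)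
      · rw [cliqueStar_adj_none_some] at hadj
        exact ⟨j, by rw [hadj]⟩
      · rw [cliqueStar_adj_some_none] at hadj
        exact ⟨i, by rw [hadj, Sym2.eq_swap]⟩
      · obtain ⟨rfl, -⟩ := cliqueStar_adj_some_some.1 hadj
        exact absurd hb (cliqueStar_not_isBridge_some_some (h i) a b)
    · rintro ⟨i, he⟩
      exact he ▸ cliqueStar_isBridge_root i

lemma ncard_setOf_isBridge_cliqueStar (h : ∀ i, 3 ≤ ENat.card (α i)) :
    {e | (cliqueStar root).IsBridge e}.ncard = Nat.card ι := by
  rw [setOf_isBridge_cliqueStar h, Set.ncard_range_of_injective]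
  intro i j hij
  exact congrArg Sigma.fst (Option.some_injective _ (Sym2.congr_right.1 hij))

end CliqueStar

abbrev extremalBlock (k : ℕ) (o : Option (Fin (k - 2))) : Type :=
  Fin (o.elim (k - 1) (fun _ => k) + 1)

abbrev extremalVertex (k : ℕ) : Type := Option (Σ o, extremalBlock k o)

/-- The paper's witness (a central `K_{k-1}` matched to `k - 1` copies of `K_k`) has one cut edge
too many for `k = 3`, where `K_2` is itself a bridge; a hub joined to one `K_k` and `k - 2` copies
of `K_{k+1}` works for every `k ≥ 3`. -/
def extremalGraph (k : ℕ) : SimpleGraph (extremalVertex k) := cliqueStar fun _ => 0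

lemma card_extremalVertex {k : ℕ} (hk : 2 ≤ k) :
    Fintype.card (extremalVertex k) = k ^ 2 - 1 := by
  simp only [Fintype.card_option, Fintype.card_sigma, Fintype.sum_option, Fintype.card_fin,
    Option.elim_none, Option.elim_some, Finset.sum_const, Finset.card_univ, smul_eq_mul]
  obtain ⟨m, rfl⟩ : ∃ m, k = m + 2 := ⟨k - 2, by omega⟩
  simp only [Nat.add_sub_cancel]
  ring_nf
  omega

lemma vdeg_extremalGraph_none (k : ℕ) : vdeg (extremalGraph k) none = k - 2 + 1 := by
  rw [extremalGraph, vdeg_cliqueStar_none, Nat.card_eq_fintype_card, Fintype.card_option,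
    Fintype.card_fin]

lemma le_vdeg_extremalGraph {k : ℕ} (v : extremalVertex k) :
    k - 1 ≤ vdeg (extremalGraph k) v := by
  rcases v with _ | ⟨o, a⟩
  · rw [vdeg_extremalGraph_none]
    omega
  · refine le_trans ?_ (le_vdeg_cliqueStar_some (α := extremalBlock k) (root := fun _ => 0) a)
    rcases o <;> simp

lemma three_le_enatCard_extremalBlock {k : ℕ} (hk : 3 ≤ k) (o : Option (Fin (k - 2))) :
    3 ≤ ENat.card (extremalBlock k o) := by
  rw [ENat.card_eq_coe_fintype_card, Fintype.card_fin, Nat.ofNat_le_cast]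
  rcases o with _ | _ <;> simp only [Option.elim_none, Option.elim_some] <;> omega

lemma ncard_setOf_isBridge_extremalGraph {k : ℕ} (hk : 3 ≤ k) :
    {e | (extremalGraph k).IsBridge e}.ncard = k - 1 := by
  rw [extremalGraph, ncard_setOf_isBridge_cliqueStar (three_le_enatCard_extremalBlock hk),
    Nat.card_eq_fintype_card, Fintype.card_option, Fintype.card_fin]
  omega

theorem stmt_2 (k : ℕ) (hk : 3 ≤ k) :
    ∃ (V : Type) (_ : Fintype V) (R : SimpleGraph V),
      Fintype.card V = k ^ 2 - 1 ∧ R.Connected ∧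
      (∀ v, k - 1 ≤ vdeg R v) ∧ (∃ v, vdeg R v = k - 1) ∧
      {e : Sym2 V | R.IsBridge e}.ncard = k - 1 :=
  ⟨extremalVertex k, inferInstance, extremalGraph k, card_extremalVertex (by omega),
    cliqueStar_connected, le_vdeg_extremalGraph, ⟨none, by rw [vdeg_extremalGraph_none]; omega⟩,
    ncard_setOf_isBridge_extremalGraph hk⟩
end

section
/- Let G be a connected graph of order n ≥ max{k²+k, (⌊k/2⌋·k(k−2)+k²−5k+3)/(k−4)}, where k ≥ 5. If deg(x)+deg(y) ≥ (2n−2k+1)/k for every pair of non-adjacent vertices x, y of G, then G has at most k−2 cut edges. -/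
open SimpleGraph

/-!
Remove all `b` bridges of `G`. The resulting components are the vertices of the bridge tree, so
there are at least `b + 1` of them and the numbers of bridges at them sum to `2b`. Call a
component inner if some vertex of it lies on no bridge: that vertex has no neighbour outside its
component, so its degree is less than the component's size. In any other component, the vertex
on fewest bridges has degree at most the number of bridges at the component. Applying the degree
condition to these representative vertices (for two non-inner components, when no bridge joins
them) bounds sizes and bridge numbers from below in terms of `σ = (2n - 2k + 1) / k`; since the
bridge tree has no triangle, at most two non-inner components have fewer than `σ / 2` bridges.
If `b ≥ k - 1`, counting vertices and bridges leaves fewer than `k` inner components and at most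
three others, and a case analysis on these numbers contradicts the lower bounds on `n`.
-/

open Finset

namespace Finset

variable {ι K : Type*} [Field K] [LinearOrder K] [IsStrictOrderedRing K]

theorem card_mul_le_two_mul_sum_of_pairwise {s : Finset ι} {f : ι → K} {c : K}
    (h : ∀ i ∈ s, ∀ j ∈ s, i ≠ j → c ≤ f i + f j) (hs : 2 ≤ #s) :
    #s * c ≤ 2 * ∑ i ∈ s, f i := by
  classical
  have hrow : ∀ i ∈ s, (#s - 1 : K) * c ≤ (#s - 2) * f i + ∑ j ∈ s, f j := by
    intro i hi
    calc (#s - 1 : K) * c = ∑ j ∈ s.erase i, c := by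
          rw [sum_const, card_erase_of_mem hi, nsmul_eq_mul, Nat.cast_pred (by omega)]
      _ ≤ ∑ j ∈ s.erase i, (f i + f j) :=
          sum_le_sum fun j hj ↦ h i hi j (mem_of_mem_erase hj) (ne_of_mem_erase hj).symm
      _ = (#s - 2) * f i + ∑ j ∈ s, f j := by
          rw [sum_add_distrib, sum_const, card_erase_of_mem hi, nsmul_eq_mul,
            Nat.cast_pred (by omega), sum_erase_eq_sub hi]
          ring
  have hsum := sum_le_sum hrow
  rw [sum_const, nsmul_eq_mul, sum_add_distrib, ← mul_sum, sum_const, nsmul_eq_mul] at hsum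
  have hs' : (2 : K) ≤ #s := by exact_mod_cast hs
  nlinarith

theorem le_sum_of_card_filter_lt_le_two {s : Finset ι} {f : ι → K} {θ m : K}
    (hm : ∀ i ∈ s, m ≤ f i) (hmθ : m ≤ θ) (hsmall : #{i ∈ s | f i < θ} ≤ 2) :
    (#s - 2) * θ + 2 * m ≤ ∑ i ∈ s, f i := by
  have hlt : #{i ∈ s | f i < θ} • m ≤ ∑ i ∈ s with f i < θ, f i :=
    card_nsmul_le_sum _ f m fun i hi ↦ hm i (mem_filter.1 hi).1
  have hge : #{i ∈ s | ¬f i < θ} • θ ≤ ∑ i ∈ s with ¬f i < θ, f i :=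
    card_nsmul_le_sum _ f θ fun i hi ↦ not_lt.1 (mem_filter.1 hi).2
  have hcard : (#{i ∈ s | f i < θ} : K) + #{i ∈ s | ¬f i < θ} = #s := by
    exact_mod_cast card_filter_add_card_filter_not (s := s) (fun i ↦ f i < θ)
  have hc : (#{i ∈ s | f i < θ} : K) ≤ 2 := by exact_mod_cast hsmall
  rw [← sum_filter_add_sum_filter_not s (fun i ↦ f i < θ)]
  rw [nsmul_eq_mul] at hlt hge
  nlinarith [mul_nonneg (sub_nonneg.2 hc) (sub_nonneg.2 hmθ), congrArg (· * θ) hcard]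

end Finset

namespace SimpleGraph

variable {V : Type*} {G : SimpleGraph V}

theorem CliqueFree.card_le_of_isClique {n : ℕ} (hG : G.CliqueFree (n + 1)) {s : Finset V}
    (hs : G.IsClique (s : Set V)) : #s ≤ n := by
  by_contra! h
  obtain ⟨t, hts, ht⟩ := exists_subset_card_eq h
  exact hG t ⟨hs.subset (by exact_mod_cast hts), ht⟩

theorem reachable_deleteEdges_of_forall_not_reachable {S : Set (Sym2 V)} {r x : V}
    (hS : ∀ e ∈ S, ∀ v ∈ e, ¬(G.deleteEdges S).Reachable r v) (h : G.Reachable r x) :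
    (G.deleteEdges S).Reachable r x := by
  suffices ∀ {y} (p : G.Walk y x), (G.deleteEdges S).Reachable r y →
      (G.deleteEdges S).Reachable r x from h.elim fun p ↦ this p .rfl
  clear h
  intro y p
  induction p with
  | nil => exact id
  | cons hadj _ ih =>
    exact fun hy ↦ ih <| hy.trans <| Adj.reachable <|
      (deleteEdges_adj ..).2 ⟨hadj, fun he ↦ hS _ he _ (Sym2.mem_mk_left _ _) hy⟩

theorem reachable_of_mem_edgeSet {e : Sym2 V} (he : e ∈ G.edgeSet) {u v : V} (hu : u ∈ e)
    (hv : v ∈ e) : G.Reachable u v := by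
  obtain rfl | huv := eq_or_ne u v
  · rfl
  · rw [(Sym2.mem_and_mem_iff huv).1 ⟨hu, hv⟩] at he
    exact Adj.reachable he

theorem Connected.mem_edgeSet_of_isBridge (hG : G.Connected) {e : Sym2 V} (he : G.IsBridge e) :
    e ∈ G.edgeSet := by
  induction e with | h u v => exact he.reachable_iff_adj.1 (hG.preconnected u v)

def deleteBridges (G : SimpleGraph V) : SimpleGraph V := G.deleteEdges {e | G.IsBridge e}

theorem deleteBridges_adj {x y : V} :
    G.deleteBridges.Adj x y ↔ G.Adj x y ∧ ¬G.IsBridge s(x, y) :=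
  deleteEdges_adj ..

theorem deleteBridges_le_deleteEdges {e : Sym2 V} (he : G.IsBridge e) :
    G.deleteBridges ≤ G.deleteEdges {e} :=
  deleteEdges_anti (Set.singleton_subset_iff.2 he)

theorem isBridge_iff_connectedComponentMk_ne {x y : V} (h : G.Adj x y) :
    G.IsBridge s(x, y) ↔
      G.deleteBridges.connectedComponentMk x ≠ G.deleteBridges.connectedComponentMk y := by
  rw [Ne, ConnectedComponent.eq]
  refine ⟨fun hb hr ↦ isBridge_iff.1 hb (hr.mono (deleteBridges_le_deleteEdges hb)), ?_⟩
  intro hne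
  by_contra hb
  exact hne (deleteBridges_adj.2 ⟨h, hb⟩).reachable

theorem ncard_setOf_isBridge_add_one_le [Finite V] (hG : G.Connected) :
    {e | G.IsBridge e}.ncard + 1 ≤ Nat.card G.deleteBridges.ConnectedComponent := by
  obtain ⟨r⟩ := hG.nonempty
  have hfar : ∀ e, ∃ u, G.IsBridge e → u ∈ e ∧ ¬(G.deleteEdges {e}).Reachable r u := by
    intro e
    by_cases he : G.IsBridge e
    · induction e with
      | h u v =>
        by_contra! h
        exact isBridge_iff.1 he (((h u).2 (Sym2.mem_mk_left u v)).symm.trans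
          ((h v).2 (Sym2.mem_mk_right u v)))
    · exact ⟨r, fun h ↦ absurd h he⟩
  choose far hfar using hfar
  -- if the far endpoints of `e ≠ f` share a component, neither bridge meets the component of `r`
  -- in `G - {e, f}`
  have hcut : ∀ e f, G.IsBridge e → G.IsBridge f → e ≠ f →
      G.deleteBridges.Reachable (far e) (far f) →
      ∀ v ∈ e, ¬(G.deleteEdges {e, f}).Reachable r v := by
    intro e f he hf hef hr v hv hrv
    have hmem : e ∈ (G.deleteEdges {f}).edgeSet := by
      rw [edgeSet_deleteEdges]; exact ⟨hG.mem_edgeSet_of_isBridge he, hef⟩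
    refine (hfar f hf).2 ((hrv.mono (deleteEdges_anti (by simp))).trans ?_)
    exact (reachable_of_mem_edgeSet hmem hv (hfar e he).1).trans
      (hr.mono (deleteBridges_le_deleteEdges hf))
  set c := G.deleteBridges.connectedComponentMk
  have hmaps : ∀ e ∈ {e | G.IsBridge e}, c (far e) ∈ ({c r}ᶜ : Set _) := by
    intro e he hr
    exact (hfar e he).2
      ((ConnectedComponent.eq.1 hr).symm.mono (deleteBridges_le_deleteEdges he))
  have hinj : Set.InjOn (fun e ↦ c (far e)) {e | G.IsBridge e} := by
    intro e he f hf hr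
    by_contra hef
    have hr' := ConnectedComponent.eq.1 hr
    refine (hfar e he).2 ((reachable_deleteEdges_of_forall_not_reachable ?_
      (hG.preconnected r (far e))).mono
      (deleteEdges_anti (Set.singleton_subset_iff.2 (Set.mem_insert e {f}))))
    simp only [Set.mem_insert_iff, Set.mem_singleton_iff, forall_eq_or_imp, forall_eq]
    exact ⟨hcut e f he hf hef hr', by
      simpa [Set.pair_comm] using hcut f e hf he (Ne.symm hef) hr'.symm⟩
  calc {e | G.IsBridge e}.ncard + 1 ≤ ({c r}ᶜ : Set _).ncard + 1 := by
        gcongr; exact Set.ncard_le_ncard_of_injOn _ hmaps hinj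
    _ = Nat.card G.deleteBridges.ConnectedComponent := by
        rw [← Set.ncard_add_ncard_compl {c r}, Set.ncard_singleton, add_comm]

/-- The bridge tree of `G`. -/
def bridgeQuotient (G : SimpleGraph V) : SimpleGraph G.deleteBridges.ConnectedComponent where
  Adj C D := C ≠ D ∧ ∃ x y, G.Adj x y ∧ G.deleteBridges.connectedComponentMk x = C ∧
    G.deleteBridges.connectedComponentMk y = D
  symm := ⟨by
    rintro C D ⟨hne, x, y, h, hx, hy⟩
    exact ⟨hne.symm, y, x, h.symm, hy, hx⟩⟩
  loopless := ⟨fun _ h ↦ h.1 rfl⟩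

theorem bridgeQuotient_cliqueFree_three : G.bridgeQuotient.CliqueFree 3 := by
  classical
  intro s hs
  obtain ⟨-, -, -, ⟨h₁₂, x₁, x₂, hx, rfl, rfl⟩, ⟨h₁₃, z₁, z₃, hz, hz₁, rfl⟩,
    ⟨h₂₃, y₂, y₃, hy, hy₂, hy₃⟩, -⟩ := is3Clique_iff.1 hs
  set c := G.deleteBridges.connectedComponentMk
  have hb : G.IsBridge s(x₁, x₂) := (isBridge_iff_connectedComponentMk_ne hx).2 h₁₂
  have hreach {a b : V} (h : c a = c b) : (G.deleteEdges {s(x₁, x₂)}).Reachable a b :=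
    (ConnectedComponent.eq.1 h).mono (deleteBridges_le_deleteEdges hb)
  have hadj {a b : V} (x : V) (hx : x ∈ s(x₁, x₂)) (hab : G.Adj a b) (ha : c a ≠ c x)
      (hb : c b ≠ c x) : (G.deleteEdges {s(x₁, x₂)}).Adj a b := by
    refine (deleteEdges_adj ..).2 ⟨hab, fun he ↦ ?_⟩
    rw [Set.mem_singleton_iff] at he
    rw [← he, Sym2.mem_iff] at hx
    rcases hx with rfl | rfl
    exacts [ha rfl, hb rfl]
  -- the other two sides of the triangle give a detour around the bridge `x₁x₂`
  have h₁ := hadj x₂ (Sym2.mem_mk_right _ _) hz (hz₁ ▸ h₁₂) h₂₃.symm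
  have h₂ := hadj x₁ (Sym2.mem_mk_left _ _) hy.symm (hy₃ ▸ h₁₃.symm) (hy₂ ▸ h₁₂.symm)
  exact isBridge_iff.1 hb <| (hreach hz₁.symm).trans <| h₁.reachable.trans <|
    (hreach hy₃.symm).trans <| h₂.reachable.trans (hreach hy₂)

theorem bridgeGraph_adj {x y : V} : (bridgeGraph G).Adj x y ↔ G.IsBridge s(x, y) := by
  rw [bridgeGraph, fromEdgeSet_adj, Set.mem_ofPred_eq, and_iff_left_iff_imp]
  rintro hb rfl
  exact isBridge_iff.1 hb .rfl

theorem edgeSet_bridgeGraph : (bridgeGraph G).edgeSet = {e | G.IsBridge e} := by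
  ext e
  induction e with | h x y => exact bridgeGraph_adj

section Components

open scoped Classical

variable [Fintype V] (G)

noncomputable def compCard (C : G.deleteBridges.ConnectedComponent) : ℕ :=
  #{x | G.deleteBridges.connectedComponentMk x = C}

noncomputable def compBridgeDegree (C : G.deleteBridges.ConnectedComponent) : ℕ :=
  ∑ x with G.deleteBridges.connectedComponentMk x = C, (bridgeGraph G).degree x

def HasInnerVertex (C : G.deleteBridges.ConnectedComponent) : Prop :=
  ∃ x, G.deleteBridges.connectedComponentMk x = C ∧ (bridgeGraph G).degree x = 0

variable {G}

theorem sum_compCard : ∑ C, G.compCard C = Fintype.card V :=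
  (card_eq_sum_card_fiberwise fun _ _ ↦ mem_univ _).symm

theorem sum_compBridgeDegree : ∑ C, G.compBridgeDegree C = 2 * {e | G.IsBridge e}.ncard := by
  rw [← edgeSet_bridgeGraph, ← coe_edgeFinset, Set.ncard_coe_finset,
    ← sum_degrees_eq_twice_card_edges]
  simp only [compBridgeDegree]
  convert sum_fiberwise univ G.deleteBridges.connectedComponentMk _

theorem compCard_pos (C : G.deleteBridges.ConnectedComponent) : 0 < G.compCard C := by
  induction C using ConnectedComponent.ind with
  | h x => exact card_pos.2 ⟨x, by simp⟩

theorem compBridgeDegree_pos (hG : G.Connected)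
    (h : 1 < Fintype.card G.deleteBridges.ConnectedComponent)
    (C : G.deleteBridges.ConnectedComponent) : 0 < G.compBridgeDegree C := by
  obtain ⟨D, hD⟩ := Fintype.exists_ne_of_one_lt_card h C
  induction C using ConnectedComponent.ind with | h x =>
  induction D using ConnectedComponent.ind with | h y =>
  obtain ⟨d, -, hd₁, hd₂⟩ := (hG.preconnected x y).some.exists_boundary_dart
    {v | G.deleteBridges.connectedComponentMk v = G.deleteBridges.connectedComponentMk x} rfl hD
  have hbr : (bridgeGraph G).Adj d.fst d.snd :=
    bridgeGraph_adj.2 <|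
      (isBridge_iff_connectedComponentMk_ne d.adj).2 (hd₁.trans_ne (Ne.symm hd₂))
  refine lt_of_lt_of_le ((degree_pos_iff_exists_adj _ _).2 ⟨_, hbr⟩) ?_
  exact single_le_sum (f := fun x ↦ (bridgeGraph G).degree x) (fun _ _ ↦ Nat.zero_le _)
    (mem_filter.2 ⟨mem_univ _, hd₁⟩)

variable (G) in
theorem degree_add_one_le (x : V) :
    G.degree x + 1 ≤
      G.compCard (G.deleteBridges.connectedComponentMk x) + (bridgeGraph G).degree x := by
  set c := G.deleteBridges.connectedComponentMk with hc
  have hsub : G.neighborFinset x ⊆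
      ({y | c y = c x} : Finset V).erase x ∪ (bridgeGraph G).neighborFinset x := by
    intro y hy
    rw [mem_neighborFinset] at hy
    by_cases hc : c y = c x
    · exact mem_union_left _ (mem_erase.2 ⟨hy.ne.symm, by simpa using hc⟩)
    · exact mem_union_right _ ((mem_neighborFinset ..).2 (bridgeGraph_adj.2
        ((isBridge_iff_connectedComponentMk_ne hy).2 (Ne.symm hc))))
  have hcard := (card_le_card hsub).trans (card_union_le _ _)
  rw [card_erase_of_mem (by simp), card_neighborFinset_eq_degree,
    card_neighborFinset_eq_degree] at hcard
  have := G.compCard_pos (c x)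
  simp only [compCard, ← hc] at this ⊢
  omega

theorem connectedComponentMk_eq_of_adj_of_degree_eq_zero {x y : V}
    (hx : (bridgeGraph G).degree x = 0) (h : G.Adj x y) :
    G.deleteBridges.connectedComponentMk y = G.deleteBridges.connectedComponentMk x := by
  by_contra hne
  have := (degree_pos_iff_exists_adj _ _).2
    ⟨y, bridgeGraph_adj.2 ((isBridge_iff_connectedComponentMk_ne h).2 (Ne.symm hne))⟩
  omega

theorem HasInnerVertex.exists_degree_lt_compCard {C : G.deleteBridges.ConnectedComponent}
    (h : G.HasInnerVertex C) :
    ∃ x, G.deleteBridges.connectedComponentMk x = C ∧ G.degree x + 1 ≤ G.compCard C ∧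
      ∀ y, G.deleteBridges.connectedComponentMk y ≠ C → ¬G.Adj x y := by
  obtain ⟨x, rfl, hx⟩ := h
  exact ⟨x, rfl, by simpa [hx] using G.degree_add_one_le x,
    fun y hy hxy ↦ hy (connectedComponentMk_eq_of_adj_of_degree_eq_zero hx hxy)⟩

theorem exists_degree_le_compBridgeDegree {C : G.deleteBridges.ConnectedComponent}
    (h : ¬G.HasInnerVertex C) :
    ∃ y, G.deleteBridges.connectedComponentMk y = C ∧ G.degree y ≤ G.compBridgeDegree C := by
  obtain ⟨y, hy, hmin⟩ := exists_min_image {x | G.deleteBridges.connectedComponentMk x = C}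
    (fun x ↦ (bridgeGraph G).degree x) (card_pos.1 (G.compCard_pos C))
  have hyC : G.deleteBridges.connectedComponentMk y = C := by simpa using hy
  have hdy : 0 < (bridgeGraph G).degree y := Nat.pos_of_ne_zero fun h0 ↦ h ⟨y, hyC, h0⟩
  -- `d := (bridgeGraph G).degree` is minimal at `y` on `C`: `degree y ≤ |C| - 1 + d y ≤ |C| * d y`
  have hsum : G.compCard C * (bridgeGraph G).degree y ≤ G.compBridgeDegree C := by
    simpa [compCard, compBridgeDegree] using card_nsmul_le_sum _ _ _ hmin
  have hy' := G.degree_add_one_le y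
  rw [hyC] at hy'
  exact ⟨y, hyC, by nlinarith [G.compCard_pos C]⟩

variable {σ : ℚ}
  (hdeg : ∀ x y, x ≠ y → ¬G.Adj x y → σ ≤ (G.degree x : ℚ) + G.degree y)
include hdeg

theorem add_two_le_compCard_add_compCard {C D : G.deleteBridges.ConnectedComponent}
    (hC : G.HasInnerVertex C) (hD : G.HasInnerVertex D) (hCD : C ≠ D) :
    σ + 2 ≤ G.compCard C + G.compCard D := by
  obtain ⟨x, rfl, hx, hxD⟩ := hC.exists_degree_lt_compCard
  obtain ⟨y, rfl, hy, -⟩ := hD.exists_degree_lt_compCard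
  have hxy := hdeg x y (by rintro rfl; exact hCD rfl) (hxD y hCD.symm)
  have : ((G.degree x + 1 : ℕ) : ℚ) + (G.degree y + 1 : ℕ) ≤ _ + _ :=
    add_le_add (Nat.cast_le.2 hx) (Nat.cast_le.2 hy)
  push_cast at this
  linarith

theorem add_one_le_compCard_add_compBridgeDegree {C D : G.deleteBridges.ConnectedComponent}
    (hC : G.HasInnerVertex C) (hD : ¬G.HasInnerVertex D) :
    σ + 1 ≤ G.compCard C + G.compBridgeDegree D := by
  have hCD : C ≠ D := by rintro rfl; exact hD hC
  obtain ⟨x, rfl, hx, hxD⟩ := hC.exists_degree_lt_compCard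
  obtain ⟨y, rfl, hy⟩ := exists_degree_le_compBridgeDegree hD
  have hxy := hdeg x y (by rintro rfl; exact hCD rfl) (hxD y hCD.symm)
  have : ((G.degree x + 1 : ℕ) : ℚ) + (G.degree y : ℕ) ≤ _ + _ :=
    add_le_add (Nat.cast_le.2 hx) (Nat.cast_le.2 hy)
  push_cast at this
  linarith

theorem le_compBridgeDegree_add_compBridgeDegree {C D : G.deleteBridges.ConnectedComponent}
    (hC : ¬G.HasInnerVertex C) (hD : ¬G.HasInnerVertex D) (hCD : C ≠ D)
    (hadj : ¬G.bridgeQuotient.Adj C D) :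
    σ ≤ G.compBridgeDegree C + G.compBridgeDegree D := by
  obtain ⟨x, rfl, hx⟩ := exists_degree_le_compBridgeDegree hC
  obtain ⟨y, rfl, hy⟩ := exists_degree_le_compBridgeDegree hD
  have hxy := hdeg x y (by rintro rfl; exact hCD rfl) fun h ↦ hadj ⟨hCD, x, y, h, rfl, rfl⟩
  have : ((G.degree x : ℕ) : ℚ) + (G.degree y : ℕ) ≤ _ + _ :=
    add_le_add (Nat.cast_le.2 hx) (Nat.cast_le.2 hy)
  linarith

end Components

end SimpleGraph

theorem card_lt_of_pairwise_le_add {ι : Type*} {s : Finset ι} {f : ι → ℕ} {k n : ℕ} {σ : ℚ}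
    (hk : 2 ≤ k) (hkσ : k * σ = 2 * n - 2 * k + 1) (hsum : ∑ i ∈ s, f i ≤ n)
    (h : ∀ i ∈ s, ∀ j ∈ s, i ≠ j → σ + 2 ≤ f i + f j) : #s < k := by
  by_contra! hs
  have := card_mul_le_two_mul_sum_of_pairwise (f := fun i ↦ (f i : ℚ)) h (by omega)
  have hsum' : ∑ i ∈ s, (f i : ℚ) ≤ n := by exact_mod_cast hsum
  have hs' : (k : ℚ) ≤ #s := by exact_mod_cast hs
  have hk' : (2 : ℚ) ≤ k := by exact_mod_cast hk
  nlinarith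

theorem card_le_three_of_sum_le {k g s : ℕ} {σ W : ℚ} (hk : 5 ≤ k) (hσ : 2 * k < σ)
    (hgk : g < k) (hlow : (s - 2 : ℚ) * (σ / 2) + 2 ≤ W) (hW : W + 2 + g ≤ 2 * (g + s)) :
    s ≤ 3 ∧ (s = 3 → g + 1 = k) := by
  have hk' : (5 : ℚ) ≤ k := by exact_mod_cast hk
  have hgk' : (g : ℚ) + 1 ≤ k := by exact_mod_cast hgk
  refine ⟨?_, fun hs ↦ ?_⟩
  · by_contra! hs
    have hs' : (4 : ℚ) ≤ s := by exact_mod_cast hs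
    nlinarith [mul_le_mul_of_nonneg_left hσ.le (by linarith : (0 : ℚ) ≤ s - 2),
      mul_nonneg (by linarith : (0 : ℚ) ≤ s - 3) (by linarith : (0 : ℚ) ≤ k - 5)]
  · subst hs
    have : (k : ℚ) < g + 2 := by push_cast at hlow hW; linarith
    have : k < g + 2 := by exact_mod_cast this
    omega

theorem false_of_component_counts {k n g s a w₀ : ℕ} {σ : ℚ} (hk : 5 ≤ k)
    (hn1 : k ^ 2 + k ≤ n)
    (hn2 : (((k / 2 : ℕ) : ℚ) * k * ((k : ℚ) - 2) + (k : ℚ) ^ 2 - 5 * k + 3) /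
      ((k : ℚ) - 4) ≤ n)
    (hkσ : k * σ = 2 * n - 2 * k + 1) (hgk : g < k) (hgs : k ≤ g + s) (hs : s ≤ 3)
    (hs3 : s = 3 → g + 1 = k) (hna : g * a + s ≤ n) (hw₀ : σ + 1 - a ≤ w₀)
    (hsw : s * w₀ + 2 ≤ g + 2 * s) : False := by
  have key : (2 * g - k : ℚ) * n ≤ g * k * (1 + w₀) - g - k * s := by
    have hna' : (g * a + s : ℚ) ≤ n := by exact_mod_cast hna
    have : (g * k : ℚ) * (σ + 1 - w₀) ≤ g * k * a := by gcongr; linarith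
    nlinarith
  have hn1' : (k ^ 2 + k : ℚ) ≤ n := by exact_mod_cast hn1
  interval_cases s
  · omega
  · obtain rfl : k = g + 1 := by omega
    -- `key` alone misses by `1 / (k - 2)`; the integrality of `a` closes the gap
    have h2n : 2 * n + 1 ≤ (g + 1) * a + (g + 1) ^ 2 := by
      have hw : (w₀ : ℚ) ≤ g := by exact_mod_cast (by omega : w₀ ≤ g)
      have : (g + 1 : ℚ) * σ ≤ (g + 1) * (a + g - 1) := by gcongr; linarith
      have : (2 * n + 1 : ℚ) ≤ (g + 1) * a + (g + 1) ^ 2 := by push_cast at hkσ; nlinarith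
      exact_mod_cast this
    rcases Nat.lt_or_ge a (g + 4) with ha | ha
    · nlinarith
    · nlinarith
  · have hg : (3 : ℚ) ≤ g := by exact_mod_cast (by omega : 3 ≤ g)
    rcases (by omega : k = g + 1 ∨ k = g + 2) with rfl | rfl
    · have hw : (2 * w₀ : ℚ) ≤ g + 2 := by exact_mod_cast (by omega : 2 * w₀ ≤ g + 2)
      push_cast at *
      nlinarith [mul_le_mul_of_nonneg_left hn1' (by linarith : (0 : ℚ) ≤ g - 1),
        mul_le_mul_of_nonneg_left hw (by positivity : (0 : ℚ) ≤ g * (g + 1))]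
    -- the only case that needs `hn2`, which is exactly what `key` violates here
    · have hw : (w₀ : ℚ) ≤ ((g + 2) / 2 : ℕ) := by
        exact_mod_cast (by omega : w₀ ≤ (g + 2) / 2)
      rw [div_le_iff₀ (by push_cast; linarith)] at hn2
      push_cast at *
      nlinarith [mul_le_mul_of_nonneg_left hw (by positivity : (0 : ℚ) ≤ g * (g + 2))]
  · obtain rfl : k = g + 1 := (hs3 rfl).symm
    have hg : (4 : ℚ) ≤ g := by exact_mod_cast (by omega : 4 ≤ g)
    have hw : (3 * w₀ : ℚ) ≤ g + 4 := by exact_mod_cast (by omega : 3 * w₀ ≤ g + 4)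
    push_cast at *
    nlinarith [mul_le_mul_of_nonneg_left hn1' (by linarith : (0 : ℚ) ≤ g - 1),
      mul_le_mul_of_nonneg_left hw (by positivity : (0 : ℚ) ≤ g * (g + 1)),
      mul_nonneg (by linarith : (0 : ℚ) ≤ g - 3) (sq_nonneg ((g : ℚ) + 1))]

/-- Applied with `inner` the inner components, `sz` the component sizes, `w` the numbers of bridges
at the components and `T` the bridge tree. -/
theorem card_lt_of_component_bounds {ι : Type*} [Fintype ι] [DecidableEq ι]
    {T : SimpleGraph ι} (hT : T.CliqueFree 3) (inner : Finset ι) {sz w : ι → ℕ} {k n : ℕ}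
    {σ : ℚ} (hk : 5 ≤ k) (hn1 : k ^ 2 + k ≤ n)
    (hn2 : (((k / 2 : ℕ) : ℚ) * k * ((k : ℚ) - 2) + (k : ℚ) ^ 2 - 5 * k + 3) /
      ((k : ℚ) - 4) ≤ n)
    (hkσ : k * σ = 2 * n - 2 * k + 1) (hsz : ∑ i, sz i = n) (hsz_pos : ∀ i, 0 < sz i)
    (hw_pos : ∀ i, 0 < w i) (hw : ∑ i, w i + 2 ≤ 2 * Fintype.card ι)
    (hii : ∀ i ∈ inner, ∀ j ∈ inner, i ≠ j → σ + 2 ≤ sz i + sz j)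
    (hio : ∀ i ∈ inner, ∀ j ∉ inner, σ + 1 ≤ sz i + w j)
    (hoo : ∀ i ∉ inner, ∀ j ∉ inner, i ≠ j → ¬T.Adj i j → σ ≤ w i + w j) :
    Fintype.card ι < k := by
  by_contra! hcard
  rw [← card_add_card_compl inner] at hcard hw
  rw [← sum_add_sum_compl inner] at hsz hw
  have hk' : (5 : ℚ) ≤ k := by exact_mod_cast hk
  have hσ : 2 * k < σ := by
    have : (k ^ 2 + k : ℚ) ≤ n := by exact_mod_cast hn1
    nlinarith
  have hg := card_lt_of_pairwise_le_add (by omega) hkσ (by omega) hii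
  have hW : ∑ i ∈ innerᶜ, (w i : ℚ) + 2 + #inner ≤ 2 * (#inner + #innerᶜ) := by
    have : #inner ≤ ∑ i ∈ inner, w i := by
      simpa using card_nsmul_le_sum inner w 1 fun i _ ↦ hw_pos i
    exact_mod_cast (by omega : ∑ i ∈ innerᶜ, w i + 2 + #inner ≤ 2 * (#inner + #innerᶜ))
  have hsmall : #{i ∈ innerᶜ | (w i : ℚ) < σ / 2} ≤ 2 := by
    refine hT.card_le_of_isClique fun i hi j hj hij ↦ ?_
    simp only [coe_filter, mem_compl, Set.mem_ofPred_eq] at hi hj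
    by_contra h
    linarith [hoo i hi.1 j hj.1 hij h]
  have hlow := le_sum_of_card_filter_lt_le_two (f := fun i ↦ (w i : ℚ)) (m := 1)
    (fun i _ ↦ by exact_mod_cast hw_pos i) (by linarith) hsmall
  obtain ⟨hs, hs3⟩ := card_le_three_of_sum_le hk hσ hg (by linarith) hW
  obtain ⟨i₀, hi₀, hmin⟩ := exists_min_image inner sz (card_pos.1 (by omega))
  obtain ⟨j₀, hj₀, hmin'⟩ := exists_min_image innerᶜ w (card_pos.1 (by omega))
  have hna : #inner * sz i₀ + #innerᶜ ≤ n := by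
    have : #inner * sz i₀ ≤ ∑ i ∈ inner, sz i := by
      simpa using card_nsmul_le_sum inner sz _ hmin
    have : #innerᶜ ≤ ∑ i ∈ innerᶜ, sz i := by
      simpa using card_nsmul_le_sum innerᶜ sz 1 fun i _ ↦ hsz_pos i
    omega
  have hsw : #innerᶜ * w j₀ + 2 ≤ #inner + 2 * #innerᶜ := by
    have : #innerᶜ * w j₀ ≤ ∑ i ∈ innerᶜ, w i := by
      simpa using card_nsmul_le_sum innerᶜ w _ hmin'
    have : (#innerᶜ * w j₀ + 2 : ℚ) ≤ #inner + 2 * #innerᶜ := by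
      linarith [(by exact_mod_cast this : (#innerᶜ * w j₀ : ℚ) ≤ ∑ i ∈ innerᶜ, (w i : ℚ))]
    exact_mod_cast this
  exact false_of_component_counts hk hn1 hn2 hkσ hg hcard hs hs3 hna
    (by linarith [hio i₀ hi₀ j₀ (mem_compl.1 hj₀)]) hsw

theorem vdeg_eq_degree {V : Type*} (G : SimpleGraph V) (v : V) [Fintype (G.neighborSet v)] :
    vdeg G v = G.degree v := by
  rw [vdeg, ← Nat.card_coe_set_eq, Nat.card_eq_fintype_card, card_neighborSet_eq_degree]

theorem stmt_3 {V : Type*} [Fintype V] (G : SimpleGraph V) (k : ℕ) (hk : 5 ≤ k)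
    (hn1 : k ^ 2 + k ≤ Fintype.card V)
    (hn2 : (((k / 2 : ℕ) : ℚ) * k * ((k : ℚ) - 2) + (k : ℚ) ^ 2 - 5 * k + 3) / ((k : ℚ) - 4)
      ≤ (Fintype.card V : ℚ))
    (hG : G.Connected)
    (hdeg : ∀ x y : V, x ≠ y → ¬G.Adj x y →
      (2 * (Fintype.card V : ℚ) - 2 * k + 1) / k ≤ (vdeg G x : ℚ) + (vdeg G y : ℚ)) :
    {e : Sym2 V | G.IsBridge e}.ncard ≤ k - 2 := by
  classical
  by_contra! hb
  have hcomp := ncard_setOf_isBridge_add_one_le hG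
  rw [Nat.card_eq_fintype_card] at hcomp
  have hdeg' : ∀ x y, x ≠ y → ¬G.Adj x y →
      (2 * (Fintype.card V : ℚ) - 2 * k + 1) / k ≤ G.degree x + G.degree y := by
    simpa only [vdeg_eq_degree] using hdeg
  have hσ : (k : ℚ) * ((2 * (Fintype.card V : ℚ) - 2 * k + 1) / k) =
      2 * Fintype.card V - 2 * k + 1 := mul_div_cancel₀ _ (by positivity)
  have := card_lt_of_component_bounds bridgeQuotient_cliqueFree_three {C | G.HasInnerVertex C}
    hk hn1 hn2 hσ sum_compCard compCard_pos (compBridgeDegree_pos hG (by omega))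
    (by rw [sum_compBridgeDegree]; omega)
    (fun C hC D hD ↦ add_two_le_compCard_add_compCard hdeg' (by simpa using hC)
      (by simpa using hD))
    (fun C hC D hD ↦ add_one_le_compCard_add_compBridgeDegree hdeg' (by simpa using hC)
      (by simpa using hD))
    (fun C hC D hD ↦ le_compBridgeDegree_add_compBridgeDegree hdeg' (by simpa using hC)
      (by simpa using hD))
  omega
end

section
/- Let G be a connected non-complete graph whose cut edges induce a linear forest with components Q₁,…,Q_k ordered by size such that all components except possibly the largest are single edges (order 2) and the largest component Q_k has order at most 4; or whose cut-edge set is empty. Then cfc(G) = 2. -/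
open SimpleGraph

/-!
Since the only component of `C(G)` of order at least three is a path on at most four vertices,
a single cut edge `m` meets every path of length two in `C(G)` (no edge is needed if there is no
such path). Fix a spanning tree `T` of `G`, give colour `0` to the edges of `T` other than `m` and
colour `1` to all other edges.

Let `u, v` be non-adjacent and `p` the path joining them in `T`. If `p` passes through `m`, then
`m` is its only edge of colour `1`. If `p` has an edge `e` that is not a cut edge, a cycle through
`e` contains a non-tree edge `xy` joining the two components of `T - e`; no cut edge off `p`
separates `u`, `x`, `y`, `v`, so the tree paths `u ⋯ x` and `y ⋯ v` avoid `m`, and `xy` is the only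
edge of colour `1` on `u ⋯ x y ⋯ v`. Otherwise the first two edges of `p` would be a path of length
two in `C(G)` avoiding `m`. One colour is not enough, as non-adjacent vertices exist.
-/

theorem List.length_filter_eq_one_of_nodup {α : Type*} [DecidableEq α] {l : List α} {m : α}
    {P : α → Bool} (hl : l.Nodup) (hm : m ∈ l) (hP : ∀ a ∈ l, P a ↔ a = m) :
    (l.filter P).length = 1 := by
  have hfilter : l.filter P = l.filter (· == m) :=
    List.filter_congr fun a ha => by rw [Bool.eq_iff_iff, beq_iff_eq]; exact hP a ha
  rw [hfilter, ← List.count_eq_length_filter]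
  exact List.count_eq_one_of_mem hl hm

namespace SimpleGraph

variable {V : Type*} {G : SimpleGraph V}

theorem Walk.IsTrail.not_reachable_deleteEdges_of_isBridge {u v : V} {p : G.Walk u v}
    (hp : p.IsTrail) {e : Sym2 V} (he : e ∈ p.edges) (hb : G.IsBridge e) :
    ¬(G.deleteEdges {e}).Reachable u v := by
  induction p with
  | nil => simp at he
  | @cons u t v h q ih =>
    rw [Walk.isTrail_cons] at hp
    intro huv
    by_cases hut : s(u, t) = e
    · subst hut
      have htv : (G.deleteEdges {s(u, t)}).Reachable t v :=
        ⟨q.toDeleteEdges _ fun f hf hfe => hp.2 (Set.mem_singleton_iff.mp hfe ▸ hf)⟩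
      exact isBridge_iff.mp hb (huv.trans htv.symm)
    · refine ih hp.1 (by simpa [Ne.symm hut] using he) (Reachable.trans ?_ huv)
      exact (deleteEdges_adj.mpr ⟨h.symm, by simpa [Sym2.eq_swap] using hut⟩).reachable

theorem Walk.reachable_of_mem_support {u v z : V} (p : G.Walk u v) (hz : z ∈ p.support) :
    G.Reachable u z := by
  classical
  exact ⟨p.takeUntil z hz⟩

theorem Walk.reachable_deleteEdges_of_mem_support {u v z : V} {e : Sym2 V} (p : G.Walk u v)
    (he : e ∉ p.edges) (hz : z ∈ p.support) : (G.deleteEdges {e}).Reachable u z := by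
  classical
  exact ⟨(p.takeUntil z hz).toDeleteEdges _ fun f hf hfe =>
    he ((Set.mem_singleton_iff.mp hfe) ▸ p.edges_takeUntil_subset_edges hz hf)⟩

theorem Connected.reachable_deleteEdges_or (hG : G.Connected) (z a b : V) :
    (G.deleteEdges {s(a, b)}).Reachable z a ∨ (G.deleteEdges {s(a, b)}).Reachable z b := by
  classical
  obtain ⟨p, hp⟩ := hG.exists_isPath z a
  by_cases he : s(a, b) ∈ p.edges
  · have hb := p.snd_mem_support_of_mem_edges he
    have ha := Walk.endpoint_notMem_support_takeUntil hp hb (p.adj_of_mem_edges he).ne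
    exact Or.inr ⟨(p.takeUntil b hb).toDeleteEdges _ fun f hf hfe => ha <| by
      rw [Set.mem_singleton_iff.mp hfe] at hf
      exact (p.takeUntil b hb).fst_mem_support_of_mem_edges hf⟩
  · exact Or.inl ⟨p.toDeleteEdges _ fun f hf hfe => he (Set.mem_singleton_iff.mp hfe ▸ hf)⟩

theorem IsTree.exists_nontree_adj_across {T : SimpleGraph V} (hT : T.IsTree) (hTG : T ≤ G)
    {u v a b : V} {p : T.Walk u v} (hp : p.IsPath) (he : s(a, b) ∈ p.edges)
    (hnb : ¬G.IsBridge s(a, b)) (hua : (T.deleteEdges {s(a, b)}).Reachable u a) :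
    ∃ x y, G.Adj x y ∧ s(x, y) ∉ T.edgeSet ∧ (T.deleteEdges {s(a, b)}).Reachable u x ∧
      ¬(T.deleteEdges {s(a, b)}).Reachable u y ∧ (T.deleteEdges {s(a, b)}).Reachable y v ∧
      ∀ f, G.IsBridge f → (G.deleteEdges {f}).Reachable a x := by
  set T' := T.deleteEdges {s(a, b)}
  have huv : ¬T'.Reachable u v := hp.isTrail.not_reachable_deleteEdges_of_isBridge he
    (isAcyclic_iff_forall_isBridge.mp hT.isAcyclic (p.edges_subset_edgeSet he))
  have hvb : T'.Reachable v b := (hT.connected.reachable_deleteEdges_or v a b).resolve_left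
    fun hva => huv (hua.trans hva.symm)
  obtain ⟨w, hw, hew⟩ : ∃ w : G.Walk a b, w.IsPath ∧ s(a, b) ∉ w.edges := by
    classical
    obtain ⟨w, hw⟩ :=
      reachable_deleteEdges_iff_exists_walk.mp (not_not.mp (isBridge_iff.not.mp hnb))
    exact ⟨w.bypass, w.bypass_isPath, fun h => hw (w.edges_bypass_subset_edges h)⟩
  obtain ⟨⟨⟨x, y⟩, hxy⟩, hdw, hx, hy⟩ :=
    w.exists_boundary_dart {z | T'.Reachable u z} hua fun hub => huv (hub.trans hvb.symm)
  simp only [Set.mem_ofPred_eq] at hx hy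
  have hxyw : s(x, y) ∈ w.edges := List.mem_map_of_mem hdw
  refine ⟨x, y, hxy, fun hxyT => hy <| hx.trans <| Adj.reachable <|
    deleteEdges_adj.mpr ⟨hxyT, fun h => hew (Set.mem_singleton_iff.mp h ▸ hxyw)⟩, hx, hy,
    ((hT.connected.reachable_deleteEdges_or y a b).resolve_left
      fun hya => hy (hua.trans hya.symm)).trans hvb.symm, fun f hf => ?_⟩
  -- `w` closed up by `s(a, b)` is a cycle, which no bridge meets
  have hfw : f ∉ w.edges := fun h => hw.isTrail.not_reachable_deleteEdges_of_isBridge h hf <|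
    (deleteEdges_adj.mpr ⟨hTG (p.adj_of_mem_edges he),
      fun h' => hnb ((Set.mem_singleton_iff.mp h') ▸ hf)⟩).reachable
  exact w.reachable_deleteEdges_of_mem_support hfw (w.dart_fst_mem_support_of_mem_darts hdw)

theorem IsTree.exists_isPath_through_nontree_edge {T : SimpleGraph V} (hT : T.IsTree)
    (hTG : T ≤ G) {u v : V} {p : T.Walk u v} (hp : p.IsPath) {e : Sym2 V} (he : e ∈ p.edges)
    (hnb : ¬G.IsBridge e) :
    ∃ q : G.Walk u v, q.IsPath ∧ ∃ d ∈ q.edges, d ∉ T.edgeSet ∧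
      ∀ f ∈ q.edges, f ≠ d → f ∈ T.edgeSet ∧ (G.IsBridge f → f ∈ p.edges) := by
  induction e using Sym2.ind with | _ a b => ?_
  wlog hua : (T.deleteEdges {s(a, b)}).Reachable u a generalizing a b
  · rw [Sym2.eq_swap] at he hnb
    refine this b a he hnb ?_
    rw [Sym2.eq_swap]
    exact (hT.connected.reachable_deleteEdges_or u a b).resolve_left hua
  obtain ⟨x, y, hxy, hxyT, hux, huy, hyv, hax⟩ := hT.exists_nontree_adj_across hTG hp he hnb hua
  obtain ⟨q₁, hq₁⟩ := hux.exists_isPath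
  obtain ⟨q₂, hq₂⟩ := hyv.exists_isPath
  have hT'G : T.deleteEdges {s(a, b)} ≤ G := (deleteEdges_le _).trans hTG
  refine ⟨(q₁.mapLe hT'G).append (.cons hxy (q₂.mapLe hT'G)), ?_, s(x, y), by simp, hxyT, ?_⟩
  · rw [Walk.isPath_def, Walk.support_append, Walk.support_cons, List.tail_cons,
      Walk.support_mapLe_eq_support, Walk.support_mapLe_eq_support, List.nodup_append]
    refine ⟨hq₁.support_nodup, hq₂.support_nodup, fun z hz₁ z' hz₂ hzz => huy ?_⟩
    subst hzz
    exact (q₁.reachable_of_mem_support hz₁).trans (q₂.reachable_of_mem_support hz₂).symm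
  intro f hfq hfd
  have hfq' : f ∈ q₁.edges ∨ f ∈ q₂.edges := by simpa [hfd] using hfq
  have hfT : f ∈ T.edgeSet := by
    rcases hfq' with h | h <;>
      exact edgeSet_mono (deleteEdges_le _) (Walk.edges_subset_edgeSet _ h)
  refine ⟨hfT, fun hf => by_contra fun hfp => ?_⟩
  have hpf : f ∉ (p.mapLe hTG).edges := by rwa [Walk.edges_mapLe_eq_edges]
  have hux' : (G.deleteEdges {f}).Reachable u x :=
    ((p.mapLe hTG).reachable_deleteEdges_of_mem_support hpf
      (by simpa using p.fst_mem_support_of_mem_edges he)).trans (hax f hf)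
  have huv' : (G.deleteEdges {f}).Reachable u v :=
    (p.mapLe hTG).reachable_deleteEdges_of_mem_support hpf (Walk.end_mem_support _)
  have hxy' : (G.deleteEdges {f}).Adj x y :=
    deleteEdges_adj.mpr ⟨hxy, fun h => hfd (Set.mem_singleton_iff.mp h).symm⟩
  rcases hfq' with h | h
  · exact (hq₁.mapLe hT'G).isTrail.not_reachable_deleteEdges_of_isBridge (by simpa using h) hf hux'
  · exact (hq₂.mapLe hT'G).isTrail.not_reachable_deleteEdges_of_isBridge (by simpa using h) hf
      (hxy'.reachable.symm.trans (hux'.symm.trans huv'))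

theorem IsAcyclic.not_adj_of_adj_of_adj (hG : G.IsAcyclic) {x y z : V} (hxy : G.Adj x y)
    (hyz : G.Adj y z) : ¬G.Adj x z := fun hxz =>
  hG (.cons hxy (.cons hyz (.cons hxz.symm .nil))) <| by
    simp [Walk.cons_isCycle_iff, hxy.ne, hxy.ne.symm, hyz.ne, hxz.ne, hxz.ne.symm, Sym2.eq_swap]

theorem IsAcyclic.not_adj_of_adj_of_adj_of_adj (hG : G.IsAcyclic) {w x y z : V}
    (hwx : G.Adj w x) (hxy : G.Adj x y) (hyz : G.Adj y z) (hwy : w ≠ y) (hxz : x ≠ z) :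
    ¬G.Adj w z := fun hwz =>
  hG (.cons hwx (.cons hxy (.cons hyz (.cons hwz.symm .nil)))) <| by
    simp [Walk.cons_isCycle_iff, hwx.ne, hwx.ne.symm, hxy.ne, hyz.ne, hwz.ne, hwz.ne.symm, hwy,
      hwy.symm, hxz, Sym2.eq_swap]

theorem eq_or_eq_of_ncard_neighborSet_le_two [Finite V] {a b c z : V}
    (hdeg : (G.neighborSet b).ncard ≤ 2) (ha : G.Adj b a) (hc : G.Adj b c) (hac : a ≠ c)
    (hz : G.Adj b z) : z = a ∨ z = c := by
  by_contra! h
  have hsub : ({z, a, c} : Set V) ⊆ G.neighborSet b := by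
    rintro t (rfl | rfl | rfl) <;> assumption
  have := (Set.ncard_le_ncard hsub (Set.toFinite _)).trans hdeg
  rw [Set.ncard_insert_of_notMem (by simp [h.1, h.2]), Set.ncard_pair hac] at this
  omega

theorem three_le_ncard_supp_connectedComponentMk [Finite V] {a b c : V} (ha : G.Adj b a)
    (hc : G.Adj b c) (hac : a ≠ c) : 3 ≤ (G.connectedComponentMk b).supp.ncard := by
  have hsub : ({b, a, c} : Set V) ⊆ (G.connectedComponentMk b).supp := by
    simp only [Set.insert_subset_iff, Set.singleton_subset_iff, ConnectedComponent.mem_supp_iff]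
    exact ⟨trivial, (ConnectedComponent.connectedComponentMk_eq_of_adj ha).symm,
      (ConnectedComponent.connectedComponentMk_eq_of_adj hc).symm⟩
  refine le_of_eq_of_le ?_ (Set.ncard_le_ncard hsub (Set.toFinite _))
  rw [Set.ncard_insert_of_notMem (by simp [ha.ne, hc.ne]), Set.ncard_pair hac]

theorem IsAcyclic.adj_of_connectedComponentMk_eq [Finite V] (hG : G.IsAcyclic)
    {a₀ b₀ c₀ a₁ b₁ c₁ : V} (h4 : (G.connectedComponentMk b₀).supp.ncard ≤ 4)
    (hK : G.connectedComponentMk b₁ = G.connectedComponentMk b₀)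
    (ha₀ : G.Adj b₀ a₀) (hc₀ : G.Adj b₀ c₀) (hac₀ : a₀ ≠ c₀)
    (ha₁ : G.Adj b₁ a₁) (hc₁ : G.Adj b₁ c₁) (hac₁ : a₁ ≠ c₁) (hne : b₀ ≠ b₁) : G.Adj b₀ b₁ := by
  -- otherwise the component is `{a₀, b₀, c₀, b₁}`, and `b₁` closes a 4-cycle through `a₀, b₀, c₀`
  by_contra hno
  have mem_K {t : V} (ht : G.Adj b₁ t) : t ∈ (G.connectedComponentMk b₀).supp :=
    ((ConnectedComponent.connectedComponentMk_eq_of_adj ht).symm.trans hK :)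
  have ha₀b₁ : a₀ ≠ b₁ := by rintro rfl; exact hno ha₀
  have hc₀b₁ : c₀ ≠ b₁ := by rintro rfl; exact hno hc₀
  have hsupp : (G.connectedComponentMk b₀).supp = {a₀, b₀, c₀, b₁} := by
    refine (Set.eq_of_subset_of_ncard_le ?_ ?_ (Set.toFinite _)).symm
    · simp only [Set.insert_subset_iff, Set.singleton_subset_iff,
        ConnectedComponent.mem_supp_iff]
      exact ⟨(ConnectedComponent.connectedComponentMk_eq_of_adj ha₀).symm, trivial,
        (ConnectedComponent.connectedComponentMk_eq_of_adj hc₀).symm, hK⟩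
    · rw [Set.ncard_insert_of_notMem (by simp [ha₀.ne', hac₀, ha₀b₁]),
        Set.ncard_insert_of_notMem (by simp [hc₀.ne, hne]), Set.ncard_pair hc₀b₁]
      exact h4
  have hnbr {t : V} (ht : G.Adj b₁ t) : t = a₀ ∨ t = c₀ := by
    have := mem_K ht
    rw [hsupp] at this
    rcases this with rfl | rfl | rfl | rfl
    · exact .inl rfl
    · exact absurd ht.symm hno
    · exact .inr rfl
    · exact absurd ht (G.irrefl)
  obtain ⟨hb₁a₀, hb₁c₀⟩ : G.Adj b₁ a₀ ∧ G.Adj b₁ c₀ := by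
    rcases hnbr ha₁ with rfl | rfl <;> rcases hnbr hc₁ with rfl | rfl <;> tauto
  exact hG.not_adj_of_adj_of_adj_of_adj ha₀ hb₁a₀.symm hb₁c₀ hne hac₀ hc₀

theorem IsAcyclic.exists_subsingleton_meeting_paths_of_length_two [Finite V]
    (hG : G.IsAcyclic) (hdeg : ∀ v, (G.neighborSet v).ncard ≤ 2)
    (hsize : ∀ C : G.ConnectedComponent, C.supp.ncard ≤ 4)
    (huniq : ∀ C C' : G.ConnectedComponent, 3 ≤ C.supp.ncard → 3 ≤ C'.supp.ncard → C = C') :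
    ∃ M : Set (Sym2 V), M.Subsingleton ∧ M ⊆ G.edgeSet ∧
      ∀ a b c, a ≠ c → G.Adj a b → G.Adj b c → s(a, b) ∈ M ∨ s(b, c) ∈ M := by
  by_cases hctr : ∃ b a c, a ≠ c ∧ G.Adj b a ∧ G.Adj b c
  swap
  · push Not at hctr
    exact ⟨∅, Set.subsingleton_empty, Set.empty_subset _,
      fun a b c hac hab hbc => absurd hbc (hctr b a c hac hab.symm)⟩
  obtain ⟨b₀, a₀, c₀, hac₀, ha₀, hc₀⟩ := hctr
  have hadj {b a c b' a' c' : V} (hac : a ≠ c) (ha : G.Adj b a) (hc : G.Adj b c)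
      (hac' : a' ≠ c') (ha' : G.Adj b' a') (hc' : G.Adj b' c') (hne : b ≠ b') : G.Adj b b' :=
    hG.adj_of_connectedComponentMk_eq (hsize _)
      (huniq _ _ (three_le_ncard_supp_connectedComponentMk ha' hc' hac')
        (three_le_ncard_supp_connectedComponentMk ha hc hac)) ha hc hac ha' hc' hac' hne
  obtain ⟨m, hmG, hm⟩ : ∃ m ∈ G.edgeSet,
      ∀ b a c, a ≠ c → G.Adj b a → G.Adj b c → b ∈ m := by
    by_cases h₁ : ∃ b₁ a₁ c₁, a₁ ≠ c₁ ∧ G.Adj b₁ a₁ ∧ G.Adj b₁ c₁ ∧ b₁ ≠ b₀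
    · obtain ⟨b₁, a₁, c₁, hac₁, ha₁, hc₁, hne⟩ := h₁
      refine ⟨s(b₀, b₁), hadj hac₀ ha₀ hc₀ hac₁ ha₁ hc₁ hne.symm, fun b a c hac ha hc => ?_⟩
      by_contra hb
      simp only [Sym2.mem_iff, not_or] at hb
      exact hG.not_adj_of_adj_of_adj (hadj hac₀ ha₀ hc₀ hac₁ ha₁ hc₁ hne.symm)
        (hadj hac₁ ha₁ hc₁ hac ha hc (Ne.symm hb.2))
        (hadj hac₀ ha₀ hc₀ hac ha hc (Ne.symm hb.1))
    · push Not at h₁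
      exact ⟨s(b₀, a₀), ha₀, fun b a c hac ha hc => by simp [h₁ b a c hac ha hc]⟩
  refine ⟨{m}, Set.subsingleton_singleton, Set.singleton_subset_iff.mpr hmG,
    fun a b c hac hab hbc => ?_⟩
  obtain ⟨z, rfl⟩ := Sym2.mem_iff_exists.mp (hm b a c hac hab.symm hbc)
  rcases eq_or_eq_of_ncard_neighborSet_le_two (hdeg b) hab.symm hbc hac hmG with rfl | rfl
  · exact .inl (Sym2.eq_swap)
  · exact .inr rfl

end SimpleGraph

section

variable {V : Type*} {G : SimpleGraph V}

theorem isCFConnected_of_forall_exists_isPath {c : Sym2 V → ℕ}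
    (h : ∀ u v, u ≠ v → ¬G.Adj u v →
      ∃ q : G.Walk u v, q.IsPath ∧ ∃ d ∈ q.edges, ∀ f ∈ q.edges, c f = c d ↔ f = d) :
    IsCFConnected G c := by
  classical
  intro u v huv
  by_cases hadj : G.Adj u v
  · exact ⟨.cons hadj .nil, by simp [hadj.ne], c s(u, v), by simp⟩
  obtain ⟨q, hq, d, hdq, hd⟩ := h u v huv hadj
  exact ⟨q, hq, c d, List.length_filter_eq_one_of_nodup hq.isTrail.edges_nodup hdq
    fun f hf => by simpa using hd f hf⟩

theorem two_le_of_isCFConnected (hnc : G ≠ ⊤) {c : Sym2 V → ℕ} {k : ℕ}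
    (hc : ∀ e ∈ G.edgeSet, c e < k) (hcf : IsCFConnected G c) : 2 ≤ k := by
  obtain ⟨u, v, huv, hnadj⟩ := ne_top_iff_exists_not_adj.mp hnc
  obtain ⟨p, -, col, hcol⟩ := hcf u v huv
  by_contra! hk
  obtain ⟨e, he⟩ := List.exists_mem_of_length_pos (hcol ▸ Nat.one_pos)
  obtain ⟨hep, hec⟩ := List.mem_filter.mp he
  have hall : ∀ f ∈ p.edges, c f = col := fun f hf => by
    have := hc f (p.edges_subset_edgeSet hf)
    have := hc e (p.edges_subset_edgeSet hep)
    simp only [decide_eq_true_eq] at hec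
    omega
  rw [List.filter_eq_self.mpr (by simpa using hall), Walk.length_edges] at hcol
  exact hnadj (p.adj_of_length_eq_one hcol)

theorem cfcNum_eq_two (hnc : G ≠ ⊤) {c : Sym2 V → ℕ} (hc : ∀ e ∈ G.edgeSet, c e < 2)
    (hcf : IsCFConnected G c) : cfcNum G = 2 :=
  le_antisymm (Nat.sInf_le ⟨c, hc, hcf⟩)
    (le_csInf ⟨2, c, hc, hcf⟩ fun _ ⟨_, hc', hcf'⟩ => two_le_of_isCFConnected hnc hc' hcf')

theorem bridgeGraph_adj {a b : V} : (bridgeGraph G).Adj a b ↔ G.IsBridge s(a, b) := by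
  simp only [bridgeGraph, fromEdgeSet_adj, Set.mem_ofPred_eq, and_iff_left_iff_imp]
  rintro h rfl
  exact isBridge_iff.mp h .rfl

theorem isBridge_of_mem_edgeSet_bridgeGraph {e : Sym2 V} (he : e ∈ (bridgeGraph G).edgeSet) :
    G.IsBridge e := by
  rw [bridgeGraph, edgeSet_fromEdgeSet] at he
  exact he.1

namespace SimpleGraph

theorem IsTree.exists_isPath_unique_edge_not_mem_sdiff {T : SimpleGraph V} (hT : T.IsTree)
    (hTG : T ≤ G) {M : Set (Sym2 V)} (hM : M.Subsingleton) (hMB : M ⊆ (bridgeGraph G).edgeSet)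
    (hmeet : ∀ a b c, a ≠ c → (bridgeGraph G).Adj a b → (bridgeGraph G).Adj b c →
      s(a, b) ∈ M ∨ s(b, c) ∈ M)
    {u v : V} (huv : u ≠ v) (hadj : ¬G.Adj u v) :
    ∃ q : G.Walk u v, q.IsPath ∧ ∃ d ∈ q.edges, d ∉ T.edgeSet \ M ∧
      ∀ f ∈ q.edges, f ≠ d → f ∈ T.edgeSet \ M := by
  obtain ⟨p, hp⟩ := hT.connected.exists_isPath u v
  by_cases hpM : ∃ m ∈ M, m ∈ p.edges
  · obtain ⟨m, hmM, hmp⟩ := hpM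
    refine ⟨p.mapLe hTG, hp.mapLe hTG, m, by simpa, fun h => h.2 hmM, fun f hf hfm => ?_⟩
    rw [Walk.edges_mapLe_eq_edges] at hf
    exact ⟨p.edges_subset_edgeSet hf, fun hfM => hfm (hM hfM hmM)⟩
  push Not at hpM
  by_cases hnb : ∃ e ∈ p.edges, ¬G.IsBridge e
  · obtain ⟨e, hep, he⟩ := hnb
    obtain ⟨q, hq, d, hdq, hdT, hq'⟩ := hT.exists_isPath_through_nontree_edge hTG hp hep he
    refine ⟨q, hq, d, hdq, fun h => hdT h.1, fun f hf hfd => ⟨(hq' f hf hfd).1, fun hfM => ?_⟩⟩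
    exact hpM f hfM ((hq' f hf hfd).2 (isBridge_of_mem_edgeSet_bridgeGraph (hMB hfM)))
  push Not at hnb
  exfalso
  cases p with
  | nil => exact huv rfl
  | @cons _ w₁ _ h₁ p' =>
    cases p' with
    | nil => exact hadj (hTG h₁)
    | @cons _ w₂ _ h₂ p'' =>
      have hu : u ≠ w₂ := by rintro rfl; simp [Walk.cons_isPath_iff] at hp
      rcases hmeet u w₁ w₂ hu (bridgeGraph_adj.mpr (hnb _ (by simp)))
        (bridgeGraph_adj.mpr (hnb _ (by simp))) with h | h <;> exact hpM _ h (by simp)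

end SimpleGraph

end

theorem stmt_10 {V : Type*} [Fintype V] (G : SimpleGraph V) (hG : G.Connected) (hnc : G ≠ ⊤)
    (hlf : IsLinearForest (bridgeGraph G))
    (hsize : ∀ C : (bridgeGraph G).ConnectedComponent, C.supp.ncard ≤ 4)
    (huniq : ∀ C C' : (bridgeGraph G).ConnectedComponent,
      3 ≤ C.supp.ncard → 3 ≤ C'.supp.ncard → C = C') :
    cfcNum G = 2 := by
  classical
  obtain ⟨M, hM, hMB, hmeet⟩ :=
    hlf.1.exists_subsingleton_meeting_paths_of_length_two hlf.2 hsize huniq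
  obtain ⟨T, hTG, hT⟩ := hG.exists_isTree_le
  refine cfcNum_eq_two hnc (c := fun e => if e ∈ T.edgeSet \ M then 0 else 1)
    (fun e _ => by split_ifs <;> omega) (isCFConnected_of_forall_exists_isPath ?_)
  intro u v huv hadj
  obtain ⟨q, hq, d, hdq, hd, hq'⟩ :=
    hT.exists_isPath_unique_edge_not_mem_sdiff hTG hM hMB hmeet huv hadj
  refine ⟨q, hq, d, hdq, fun f hf => ⟨fun hfd => by_contra fun hne => ?_, fun h => h ▸ rfl⟩⟩
  simp [hd, hq' f hf hne] at hfd
end
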